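/- Let α ∈ (0,1) and h_α(t) = Σ_{n∈ℤ} 2^{−nα} sin(2^n π t). Then inf_{k∈ℕ} sup_{v₁, v₂ ∈ [0,1]} |h_α(v₁ + k) − h_α(v₂ + k)| > 0. -/

import Mathlib

open Real

/-- The two-sided Weierstrass-type series `h_α(t) = ∑_{n ∈ ℤ} 2^{-nα} sin(2^n π t)`. -/
noncomputable def weierstrassH (α t : ℝ) : ℝ :=
  ∑' n : ℤ, (2 : ℝ) ^ (-(n : ℝ) * α) * Real.sin ((2 : ℝ) ^ n * π * t)

/-- The 1-periodic high-frequency part (indices `n ≥ 1`). -/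
noncomputable def wC (α t : ℝ) : ℝ :=
  ∑' n : ℕ, (2 : ℝ) ^ (-((n : ℝ) + 1) * α) * Real.sin ((2 : ℝ) ^ (n + 1) * π * t)

/-- The Lipschitz low-frequency part (indices `n ≤ 0`). -/
noncomputable def wD (α t : ℝ) : ℝ :=
  ∑' n : ℕ, (2 : ℝ) ^ ((n : ℝ) * α) * Real.sin (((2 : ℝ)⁻¹) ^ n * π * t)

namespace WeierstrassAux

variable {α : ℝ}

lemma sin_lip (x y : ℝ) : |Real.sin x - Real.sin y| ≤ |x - y| := by
  rw [Real.sin_sub_sin, abs_mul, abs_mul]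
  have h1 : |Real.sin ((x - y) / 2)| ≤ |(x - y) / 2| := Real.abs_sin_le_abs
  have h2 : |Real.cos ((x + y) / 2)| ≤ 1 := Real.abs_cos_le_one _
  have h3 : |(2 : ℝ)| = 2 := by norm_num
  calc |(2:ℝ)| * |Real.sin ((x - y) / 2)| * |Real.cos ((x + y) / 2)|
      ≤ |(2:ℝ)| * |(x - y) / 2| * 1 := by
        apply mul_le_mul (mul_le_mul le_rfl h1 (abs_nonneg _) (abs_nonneg _)) h2
          (abs_nonneg _) (by positivity)
    _ = |x - y| := by rw [h3, abs_div, h3]; ring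

lemma rpow_C_eq (n : ℕ) :
    (2 : ℝ) ^ (-((n : ℝ) + 1) * α) = ((2 : ℝ) ^ (-α)) ^ (n + 1) := by
  rw [← Real.rpow_natCast ((2:ℝ) ^ (-α)) (n + 1), ← Real.rpow_mul (by norm_num)]
  congr 1
  push_cast
  ring

lemma rpow_D_eq (n : ℕ) :
    (2 : ℝ) ^ ((n : ℝ) * α) * ((2 : ℝ)⁻¹) ^ n = ((2 : ℝ) ^ (α - 1)) ^ n := by
  rw [← Real.rpow_natCast ((2:ℝ) ^ (α - 1)) n, ← Real.rpow_mul (by norm_num),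
    inv_pow, ← Real.rpow_natCast (2:ℝ) n, ← Real.rpow_neg (by norm_num),
    ← Real.rpow_add (by norm_num)]
  congr 1
  push_cast
  ring

lemma q_pos : (0:ℝ) < (2 : ℝ) ^ (-α) := Real.rpow_pos_of_pos (by norm_num) _

lemma q_lt_one (hα0 : 0 < α) : (2 : ℝ) ^ (-α) < 1 :=
  Real.rpow_lt_one_of_one_lt_of_neg (by norm_num) (by linarith)

lemma r_pos : (0:ℝ) < (2 : ℝ) ^ (α - 1) := Real.rpow_pos_of_pos (by norm_num) _

lemma r_lt_one (hα1 : α < 1) : (2 : ℝ) ^ (α - 1) < 1 :=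
  Real.rpow_lt_one_of_one_lt_of_neg (by norm_num) (by linarith)

lemma summable_C (hα0 : 0 < α) (t : ℝ) :
    Summable fun n : ℕ => (2 : ℝ) ^ (-((n : ℝ) + 1) * α) * Real.sin ((2 : ℝ) ^ (n + 1) * π * t) := by
  apply Summable.of_norm_bounded (g := fun n : ℕ => ((2:ℝ) ^ (-α)) ^ n)
    (summable_geometric_of_lt_one q_pos.le (q_lt_one hα0))
  intro n
  rw [norm_mul, Real.norm_eq_abs, Real.norm_eq_abs,
    abs_of_pos (Real.rpow_pos_of_pos (by norm_num) _), rpow_C_eq]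
  calc ((2:ℝ) ^ (-α)) ^ (n+1) * |Real.sin ((2:ℝ) ^ (n + 1) * π * t)|
      ≤ ((2:ℝ) ^ (-α)) ^ (n+1) * 1 := by
        apply mul_le_mul_of_nonneg_left (Real.abs_sin_le_one _) (by positivity)
    _ ≤ ((2:ℝ) ^ (-α)) ^ n := by
        rw [mul_one, pow_succ]
        exact mul_le_of_le_one_right (by positivity) (q_lt_one hα0).le

lemma summable_D (hα1 : α < 1) (t : ℝ) :
    Summable fun n : ℕ => (2 : ℝ) ^ ((n : ℝ) * α) * Real.sin (((2 : ℝ)⁻¹) ^ n * π * t) := by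
  apply Summable.of_norm_bounded
    (g := fun n : ℕ => (π * |t|) * ((2:ℝ) ^ (α - 1)) ^ n)
    ((summable_geometric_of_lt_one r_pos.le (r_lt_one hα1)).mul_left _)
  intro n
  rw [norm_mul, Real.norm_eq_abs, Real.norm_eq_abs,
    abs_of_pos (Real.rpow_pos_of_pos (by norm_num) _)]
  have h1 : |Real.sin (((2:ℝ)⁻¹) ^ n * π * t)| ≤ ((2:ℝ)⁻¹) ^ n * π * |t| := by
    refine Real.abs_sin_le_abs.trans ?_
    rw [abs_mul, abs_mul]
    rw [abs_of_pos (by positivity : (0:ℝ) < ((2:ℝ)⁻¹) ^ n), abs_of_pos Real.pi_pos]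
  calc (2:ℝ) ^ ((n:ℝ) * α) * |Real.sin (((2:ℝ)⁻¹) ^ n * π * t)|
      ≤ (2:ℝ) ^ ((n:ℝ) * α) * (((2:ℝ)⁻¹) ^ n * π * |t|) :=
        mul_le_mul_of_nonneg_left h1 (by positivity)
    _ = (π * |t|) * ((2:ℝ) ^ (α - 1)) ^ n := by rw [← rpow_D_eq]; ring

/-- Decomposition of the two-sided series into high and low frequency parts. -/
lemma decomp (hα0 : 0 < α) (hα1 : α < 1) (t : ℝ) :
    weierstrassH α t = wC α t + wD α t := by
  set f : ℤ → ℝ := fun n => (2 : ℝ) ^ (-(n : ℝ) * α) * Real.sin ((2 : ℝ) ^ n * π * t) with hf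
  have hC : HasSum (fun n : ℕ => f ((n : ℤ) + 1)) (wC α t) := by
    have := (summable_C hα0 t).hasSum
    refine this.congr_fun fun n => ?_
    simp only [hf]
    have h1 : ((n : ℤ) + 1 : ℤ) = ((n + 1 : ℕ) : ℤ) := by push_cast; ring
    rw [h1, zpow_natCast]
    congr 2
    push_cast
    ring
  have hD : HasSum (fun n : ℕ => f (-((n : ℤ) + 1) + 1)) (wD α t) := by
    have := (summable_D hα1 t).hasSum
    refine this.congr_fun fun n => ?_
    simp only [hf]
    have h1 : (-((n : ℤ) + 1) + 1 : ℤ) = -(n : ℤ) := by ring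
    rw [h1]
    have h2 : (2:ℝ) ^ (-(n:ℤ)) = ((2:ℝ)⁻¹) ^ n := by
      rw [zpow_neg, zpow_natCast, inv_pow]
    rw [h2]
    congr 2
    push_cast
    ring
  have hsum : HasSum (fun n : ℤ => f (n + 1)) (wC α t + wD α t) :=
    HasSum.of_nat_of_neg_add_one (f := fun n : ℤ => f (n + 1)) hC hD
  have hsum' : HasSum f (wC α t + wD α t) := by
    have : (fun n : ℤ => f (n + 1)) = f ∘ (Equiv.addRight (1:ℤ)) := rfl
    rw [this] at hsum
    exact (Equiv.hasSum_iff (Equiv.addRight (1:ℤ))).mp hsum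
  exact hsum'.tsum_eq

lemma wC_periodic (v : ℝ) (k : ℕ) : wC α (v + k) = wC α v := by
  unfold wC
  refine tsum_congr fun n => ?_
  congr 1
  have harg : (2:ℝ) ^ (n + 1) * π * (v + (k:ℝ)) =
      (2:ℝ) ^ (n + 1) * π * v + ((2 ^ n * k : ℤ) : ℝ) * (2 * π) := by
    push_cast
    ring
  rw [harg, Real.sin_add_int_mul_two_pi]

lemma wC_zero : wC α 0 = 0 := by
  unfold wC
  simp

lemma wD_lip (hα1 : α < 1) (t₁ t₂ : ℝ) :
    |wD α t₁ - wD α t₂| ≤ (π * (1 - (2:ℝ) ^ (α - 1))⁻¹) * |t₁ - t₂| := by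
  unfold wD
  rw [← Summable.tsum_sub (summable_D hα1 t₁) (summable_D hα1 t₂)]
  have hgeom : HasSum (fun n : ℕ => (π * |t₁ - t₂|) * ((2:ℝ) ^ (α - 1)) ^ n)
      ((π * |t₁ - t₂|) * (1 - (2:ℝ) ^ (α - 1))⁻¹) :=
    (hasSum_geometric_of_lt_one r_pos.le (r_lt_one hα1)).mul_left _
  have := tsum_of_norm_bounded hgeom (f := fun n : ℕ =>
      (2 : ℝ) ^ ((n : ℝ) * α) * Real.sin (((2 : ℝ)⁻¹) ^ n * π * t₁) -
      (2 : ℝ) ^ ((n : ℝ) * α) * Real.sin (((2 : ℝ)⁻¹) ^ n * π * t₂)) ?_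
  · rw [Real.norm_eq_abs] at this
    calc |∑' n : ℕ, ((2 : ℝ) ^ ((n : ℝ) * α) * Real.sin (((2 : ℝ)⁻¹) ^ n * π * t₁) -
          (2 : ℝ) ^ ((n : ℝ) * α) * Real.sin (((2 : ℝ)⁻¹) ^ n * π * t₂))|
        ≤ (π * |t₁ - t₂|) * (1 - (2:ℝ) ^ (α - 1))⁻¹ := this
      _ = (π * (1 - (2:ℝ) ^ (α - 1))⁻¹) * |t₁ - t₂| := by ring
  · intro n
    rw [Real.norm_eq_abs, ← mul_sub, abs_mul,
      abs_of_pos (Real.rpow_pos_of_pos (by norm_num) _)]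
    have h1 : |Real.sin (((2:ℝ)⁻¹) ^ n * π * t₁) - Real.sin (((2:ℝ)⁻¹) ^ n * π * t₂)|
        ≤ ((2:ℝ)⁻¹) ^ n * π * |t₁ - t₂| := by
      refine (sin_lip _ _).trans_eq ?_
      rw [← mul_sub, abs_mul, abs_of_pos (by positivity : (0:ℝ) < ((2:ℝ)⁻¹) ^ n * π)]
    calc (2:ℝ) ^ ((n:ℝ) * α) *
          |Real.sin (((2:ℝ)⁻¹) ^ n * π * t₁) - Real.sin (((2:ℝ)⁻¹) ^ n * π * t₂)|
        ≤ (2:ℝ) ^ ((n:ℝ) * α) * (((2:ℝ)⁻¹) ^ n * π * |t₁ - t₂|) :=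
          mul_le_mul_of_nonneg_left h1 (by positivity)
      _ = (π * |t₁ - t₂|) * ((2:ℝ) ^ (α - 1)) ^ n := by rw [← rpow_D_eq]; ring

lemma wC_bound (hα0 : 0 < α) (v : ℝ) : |wC α v| ≤ (1 - (2:ℝ) ^ (-α))⁻¹ := by
  unfold wC
  have hgeom : HasSum (fun n : ℕ => ((2:ℝ) ^ (-α)) ^ n) ((1 - (2:ℝ) ^ (-α))⁻¹) :=
    hasSum_geometric_of_lt_one q_pos.le (q_lt_one hα0)
  have := tsum_of_norm_bounded hgeom (f := fun n : ℕ =>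
      (2 : ℝ) ^ (-((n : ℝ) + 1) * α) * Real.sin ((2 : ℝ) ^ (n + 1) * π * v)) ?_
  · exact this
  · intro n
    rw [Real.norm_eq_abs, abs_mul, abs_of_pos (Real.rpow_pos_of_pos (by norm_num) _),
      rpow_C_eq]
    calc ((2:ℝ) ^ (-α)) ^ (n+1) * |Real.sin ((2:ℝ) ^ (n + 1) * π * v)|
        ≤ ((2:ℝ) ^ (-α)) ^ (n+1) * 1 :=
          mul_le_mul_of_nonneg_left (Real.abs_sin_le_one _) (by positivity)
      _ ≤ ((2:ℝ) ^ (-α)) ^ n := by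
          rw [mul_one, pow_succ]
          exact mul_le_of_le_one_right (by positivity) (q_lt_one hα0).le

lemma wC_lower (hα0 : 0 < α) (M : ℕ) :
    (2 : ℝ) ^ (-((M : ℝ) + 1) * α) ≤ wC α (((2:ℝ)⁻¹) ^ (M + 2)) := by
  unfold wC
  have key := Summable.le_tsum (summable_C hα0 (((2:ℝ)⁻¹) ^ (M + 2))) M ?_
  · have harg : (2:ℝ) ^ (M + 1) * π * ((2:ℝ)⁻¹) ^ (M + 2) = π / 2 := by
      rw [inv_pow]
      field_simp
      ring
    rw [harg, Real.sin_pi_div_two, mul_one] at key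
    exact key
  · intro j hj
    have hsin : 0 ≤ Real.sin ((2:ℝ) ^ (j + 1) * π * ((2:ℝ)⁻¹) ^ (M + 2)) := by
      rcases le_or_gt (j + 1) (M + 2) with h | h
      · apply Real.sin_nonneg_of_nonneg_of_le_pi
        · positivity
        · have hle : (2:ℝ) ^ (j + 1) * ((2:ℝ)⁻¹) ^ (M + 2) ≤ 1 := by
            rw [inv_pow, mul_inv_le_iff₀ (by positivity), one_mul]
            exact pow_le_pow_right₀ (by norm_num) h
          calc (2:ℝ) ^ (j + 1) * π * ((2:ℝ)⁻¹) ^ (M + 2)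
              = ((2:ℝ) ^ (j + 1) * ((2:ℝ)⁻¹) ^ (M + 2)) * π := by ring
            _ ≤ 1 * π := mul_le_mul_of_nonneg_right hle Real.pi_pos.le
            _ = π := one_mul π
      · have hpow : (2:ℝ) ^ (j + 1) * ((2:ℝ)⁻¹) ^ (M + 2) =
            ((2 ^ (j + 1 - (M + 2)) : ℕ) : ℝ) := by
          have he : (2:ℝ) ^ (j + 1) = (2:ℝ) ^ (M + 2) * (2:ℝ) ^ (j + 1 - (M + 2)) := by
            rw [← pow_add]
            congr 1
            omega
          rw [he, inv_pow]
          push_cast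
          field_simp
        have harg : (2:ℝ) ^ (j + 1) * π * ((2:ℝ)⁻¹) ^ (M + 2) =
            ((2 ^ (j + 1 - (M + 2)) : ℕ) : ℝ) * π := by
          rw [mul_right_comm, hpow]
        rw [harg, Real.sin_nat_mul_pi]
    positivity

end WeierstrassAux

open WeierstrassAux

theorem weierstrassH_oscillation_lower (α : ℝ) (hα : α ∈ Set.Ioo (0 : ℝ) 1) :
    0 < ⨅ k : ℕ, ⨆ v₁ ∈ Set.Icc (0 : ℝ) 1, ⨆ v₂ ∈ Set.Icc (0 : ℝ) 1,
      |weierstrassH α (v₁ + k) - weierstrassH α (v₂ + k)| := by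
  obtain ⟨hα0, hα1⟩ := hα
  -- constants
  set L : ℝ := π * (1 - (2:ℝ) ^ (α - 1))⁻¹ with hLdef
  have hr1 : (2:ℝ) ^ (α - 1) < 1 := r_lt_one hα1
  have hLpos : 0 < L := by
    apply mul_pos Real.pi_pos
    rw [inv_pos]
    linarith
  -- choose M
  have hbase : (1:ℝ) < (2:ℝ) ^ (1 - α) := by
    rw [Real.one_lt_rpow_iff_of_pos (by norm_num)]
    exact Or.inl ⟨by norm_num, by linarith⟩
  obtain ⟨M, hM⟩ := pow_unbounded_of_one_lt L hbase
  have hM' : L ≤ ((2:ℝ) ^ (1 - α)) ^ (M + 1) :=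
    hM.le.trans (pow_le_pow_right₀ hbase.le (Nat.le_succ M))
  set v₀ : ℝ := ((2:ℝ)⁻¹) ^ (M + 2) with hv₀def
  have hv₀pos : 0 < v₀ := by positivity
  have hv₀mem : v₀ ∈ Set.Icc (0:ℝ) 1 :=
    ⟨hv₀pos.le, pow_le_one₀ (by norm_num) (by norm_num)⟩
  have h0mem : (0:ℝ) ∈ Set.Icc (0:ℝ) 1 := ⟨le_rfl, zero_le_one⟩
  set c : ℝ := L * v₀ with hcdef
  have hcpos : 0 < c := mul_pos hLpos hv₀pos
  -- key inequality at v₀ : wC α v₀ ≥ 2 * L * v₀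
  have hCv₀ : 2 * L * v₀ ≤ wC α v₀ := by
    refine le_trans ?_ (wC_lower hα0 M)
    have hkey : (2 : ℝ) ^ (-((M : ℝ) + 1) * α) =
        2 * ((2:ℝ) ^ (1 - α)) ^ (M + 1) * v₀ := by
      have h1 : v₀ = (2:ℝ) ^ (-((M:ℝ) + 2)) := by
        rw [hv₀def, inv_pow, ← Real.rpow_natCast (2:ℝ) (M + 2),
          ← Real.rpow_neg (by norm_num)]
        congr 1
        push_cast
        ring
      have h2 : ((2:ℝ) ^ (1 - α)) ^ (M + 1) = (2:ℝ) ^ ((1 - α) * ((M:ℝ) + 1)) := by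
        rw [← Real.rpow_natCast ((2:ℝ) ^ (1 - α)) (M + 1), ← Real.rpow_mul (by norm_num)]
        congr 1
        push_cast
        ring
      rw [h1, h2, show (2:ℝ) * (2:ℝ) ^ ((1 - α) * ((M:ℝ) + 1)) * (2:ℝ) ^ (-((M:ℝ) + 2)) =
          (2:ℝ) ^ (1 + (1 - α) * ((M:ℝ) + 1) + -((M:ℝ) + 2)) from by
        rw [Real.rpow_add (by norm_num : (0:ℝ) < 2),
          Real.rpow_add (by norm_num : (0:ℝ) < 2), Real.rpow_one]]
      congr 1
      ring
    rw [hkey]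
    have := mul_le_mul_of_nonneg_right (mul_le_mul_of_nonneg_left hM' (by norm_num : (0:ℝ) ≤ 2)) hv₀pos.le
    linarith
  -- per-k lower bound on the distinguished pair
  have hkey : ∀ k : ℕ, c ≤ |weierstrassH α (v₀ + k) - weierstrassH α (0 + k)| := by
    intro k
    have e1 : weierstrassH α (v₀ + k) = wC α v₀ + wD α (v₀ + k) := by
      rw [decomp hα0 hα1, wC_periodic]
    have e2 : weierstrassH α (0 + k) = wD α (0 + k) := by
      rw [decomp hα0 hα1, wC_periodic, wC_zero, zero_add]
    have hDdiff : |wD α (v₀ + k) - wD α (0 + k)| ≤ L * v₀ := by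
      have := wD_lip hα1 (v₀ + (k:ℝ)) (0 + (k:ℝ))
      have harg : |(v₀ + (k:ℝ)) - (0 + (k:ℝ))| = v₀ := by
        rw [show (v₀ + (k:ℝ)) - (0 + (k:ℝ)) = v₀ by ring, abs_of_pos hv₀pos]
      rw [harg] at this
      exact this
    have habs : |wC α v₀| ≤ |weierstrassH α (v₀ + k) - weierstrassH α (0 + k)| +
        |wD α (v₀ + k) - wD α (0 + k)| := by
      have : wC α v₀ = (weierstrassH α (v₀ + k) - weierstrassH α (0 + k)) -
          (wD α (v₀ + k) - wD α (0 + k)) := by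
        rw [e1, e2]; ring
      rw [this]
      exact abs_sub _ _
    have hwCabs : wC α v₀ ≤ |wC α v₀| := le_abs_self _
    have : 2 * L * v₀ ≤ |weierstrassH α (v₀ + k) - weierstrassH α (0 + k)| + L * v₀ := by
      linarith
    linarith
  -- global upper bound
  set S : ℝ := (1 - (2:ℝ) ^ (-α))⁻¹ with hSdef
  set B : ℝ := max (2 * S + L) 0 with hBdef
  have hBnonneg : 0 ≤ B := le_max_right _ _
  have hub : ∀ k : ℕ, ∀ v₁ ∈ Set.Icc (0:ℝ) 1, ∀ v₂ ∈ Set.Icc (0:ℝ) 1,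
      |weierstrassH α (v₁ + k) - weierstrassH α (v₂ + k)| ≤ B := by
    intro k v₁ hv₁ v₂ hv₂
    have e1 : weierstrassH α (v₁ + k) = wC α v₁ + wD α (v₁ + k) := by
      rw [decomp hα0 hα1, wC_periodic]
    have e2 : weierstrassH α (v₂ + k) = wC α v₂ + wD α (v₂ + k) := by
      rw [decomp hα0 hα1, wC_periodic]
    have hDdiff : |wD α (v₁ + k) - wD α (v₂ + k)| ≤ L := by
      have h := wD_lip hα1 (v₁ + (k:ℝ)) (v₂ + (k:ℝ))
      have harg : |(v₁ + (k:ℝ)) - (v₂ + (k:ℝ))| = |v₁ - v₂| := by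
        congr 1; ring
      rw [harg] at h
      refine h.trans ?_
      have : |v₁ - v₂| ≤ 1 := by
        rw [abs_le]
        constructor <;> [linarith [hv₁.1, hv₂.2]; linarith [hv₁.2, hv₂.1]]
      calc L * |v₁ - v₂| ≤ L * 1 := mul_le_mul_of_nonneg_left this hLpos.le
        _ = L := mul_one L
    have hC1 := wC_bound hα0 v₁
    have hC2 := wC_bound hα0 v₂
    have : |weierstrassH α (v₁ + k) - weierstrassH α (v₂ + k)| ≤ 2 * S + L := by
      rw [e1, e2]
      calc |(wC α v₁ + wD α (v₁ + k)) - (wC α v₂ + wD α (v₂ + k))|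
          = |(wC α v₁ - wC α v₂) + (wD α (v₁ + k) - wD α (v₂ + k))| := by ring_nf
        _ ≤ |wC α v₁ - wC α v₂| + |wD α (v₁ + k) - wD α (v₂ + k)| := abs_add_le _ _
        _ ≤ (|wC α v₁| + |wC α v₂|) + L := add_le_add (abs_sub _ _) hDdiff
        _ ≤ (S + S) + L := by linarith
        _ = 2 * S + L := by ring
    exact this.trans (le_max_left _ _)
  -- sup manipulations
  have hstep : ∀ k : ℕ, c ≤ ⨆ v₁ ∈ Set.Icc (0 : ℝ) 1, ⨆ v₂ ∈ Set.Icc (0 : ℝ) 1,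
      |weierstrassH α (v₁ + k) - weierstrassH α (v₂ + k)| := by
    intro k
    set P : ℝ → ℝ → ℝ := fun v₁ v₂ => |weierstrassH α (v₁ + k) - weierstrassH α (v₂ + k)|
      with hPdef
    -- bound inner sups
    have hinner2_le : ∀ v₁ ∈ Set.Icc (0:ℝ) 1, ∀ v₂ : ℝ,
        (⨆ _ : v₂ ∈ Set.Icc (0:ℝ) 1, P v₁ v₂) ≤ B := by
      intro v₁ hv₁ v₂
      by_cases hv₂ : v₂ ∈ Set.Icc (0:ℝ) 1
      · rw [ciSup_pos hv₂]
        exact hub k v₁ hv₁ v₂ hv₂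
      · haveI : IsEmpty (v₂ ∈ Set.Icc (0:ℝ) 1) := ⟨hv₂⟩
        rw [Real.iSup_of_isEmpty]
        exact hBnonneg
    have hinner3_le : ∀ v₁ : ℝ,
        (⨆ _ : v₁ ∈ Set.Icc (0:ℝ) 1, ⨆ v₂, ⨆ _ : v₂ ∈ Set.Icc (0:ℝ) 1, P v₁ v₂) ≤ B := by
      intro v₁
      by_cases hv₁ : v₁ ∈ Set.Icc (0:ℝ) 1
      · rw [ciSup_pos hv₁]
        exact Real.iSup_le (hinner2_le v₁ hv₁) hBnonneg
      · haveI : IsEmpty (v₁ ∈ Set.Icc (0:ℝ) 1) := ⟨hv₁⟩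
        rw [Real.iSup_of_isEmpty]
        exact hBnonneg
    -- lower bound chain
    have h1 : c ≤ ⨆ _ : (0:ℝ) ∈ Set.Icc (0:ℝ) 1, P v₀ 0 := by
      rw [ciSup_pos h0mem]
      exact hkey k
    have h2 : c ≤ ⨆ v₂, ⨆ _ : v₂ ∈ Set.Icc (0:ℝ) 1, P v₀ v₂ := by
      refine le_ciSup_of_le ⟨B, ?_⟩ 0 h1
      rintro x ⟨v₂, rfl⟩
      exact hinner2_le v₀ hv₀mem v₂
    have h3 : c ≤ ⨆ _ : v₀ ∈ Set.Icc (0:ℝ) 1, ⨆ v₂, ⨆ _ : v₂ ∈ Set.Icc (0:ℝ) 1, P v₀ v₂ := by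
      rw [ciSup_pos hv₀mem]
      exact h2
    refine le_ciSup_of_le ⟨B, ?_⟩ v₀ h3
    rintro x ⟨v₁, rfl⟩
    exact hinner3_le v₁
  calc (0:ℝ) < c := hcpos
    _ ≤ _ := le_ciInf hstep
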